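/- arXiv:2603.17862 — 2 statements merged into one kernel-verified Lean document; each statement's English description precedes it below -/
import Mathlib

section
/- Let λ ∈ ℝⁿ with λ_i > 0 for every agent i, let x ∈ M maximize ∑_i λ_i (u_i · y_i) over y ∈ M, and let i* be an agent maximizing p(λ) · (x_i − ω_i) over all agents i. Set α := max(p(λ) · (x_{i*} − ω_{i*}), 0). Then u_{i*} · x_{i*} = max{u_{i*} · y : y ∈ Δⁿ₋ and p(λ) · y ≤ p(λ) · ω_{i*} + α}; that is, the agent with the greatest excess expenditure receives her favorite affordable bundle. -/
open Finset

/-- Dot product of two vectors in `ℝⁿ`. -/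
def dotp {n : ℕ} (a b : Fin n → ℝ) : ℝ := ∑ j, a j * b j

/-- Membership in `Δⁿ₋`: nonnegative with coordinate sum at most 1. -/
def InSimplexLe {n : ℕ} (y : Fin n → ℝ) : Prop := (∀ j, 0 ≤ y j) ∧ ∑ j, y j ≤ 1

/-- The set `M` of allocations: nonnegative doubly stochastic matrices. -/
def IsAlloc {n : ℕ} (x : Fin n → Fin n → ℝ) : Prop :=
  (∀ i j, 0 ≤ x i j) ∧ (∀ i, ∑ j, x i j = 1) ∧ (∀ j, ∑ i, x i j = 1)

/-- The feasible set for the relaxed welfare problem where the supply of good `l`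
is doubled. -/
def FeasRelax {n : ℕ} (l : Fin n) (x : Fin n → Fin n → ℝ) : Prop :=
  (∀ i j, 0 ≤ x i j) ∧ (∀ i, ∑ j, x i j ≤ 1) ∧
  (∀ j, j ≠ l → ∑ i, x i j ≤ 1) ∧ (∑ i, x i l ≤ 2)

/-- `W(λ)`: the maximum weighted welfare over allocations. -/
noncomputable def Wval {n : ℕ} (u : Fin n → Fin n → ℝ) (lam : Fin n → ℝ) : ℝ :=
  sSup ((fun x => ∑ i, lam i * dotp (u i) (x i)) '' {x | IsAlloc x})

/-- `W_l(λ)`: the maximum weighted welfare when the supply of good `l` is doubled. -/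
noncomputable def Wrelax {n : ℕ} (u : Fin n → Fin n → ℝ) (lam : Fin n → ℝ)
    (l : Fin n) : ℝ :=
  sSup ((fun x => ∑ i, lam i * dotp (u i) (x i)) '' {x | FeasRelax l x})

/-- The VCG price vector `p(λ)`, with `p_l(λ) = W_l(λ) − W(λ)`. -/
noncomputable def vcg {n : ℕ} (u : Fin n → Fin n → ℝ) (lam : Fin n → ℝ) :
    Fin n → ℝ :=
  fun l => Wrelax u lam l - Wval u lam

/-!
Put `A i j = λ_i u_i j`, `W = W(λ)`, and let `W₋ᵢ` be the optimal welfare of the economy without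
agent `i`. The VCG prices `p` and `q_i = W - W₋ᵢ` form a dual solution of the assignment problem:
`A i j ≤ q_i + p_j`, because agent `i` can be given good `j` on top of any allocation without her
once the supply of `j` is doubled; and `∑ q + ∑ p ≤ W`, because for an optimal permutation `σ`,
`W_{σ i} ≤ A i (σ i) + W₋ᵢ`. The latter comes from Birkhoff's theorem applied to the dilation of a
relaxed allocation plus `σ` with agent `i` removed. By weak duality complementary slackness holds
at `x`, so every agent's bundle is her favourite among those costing at most `p · x_i`. Finally the
excess expenditures `p · (x_i - ω_i)` sum to zero, so the greatest one is nonnegative and equals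
`α`.
-/

open Matrix

section SubDoublyStochastic

variable {ι : Type*} [Fintype ι]

def IsSubDoublyStochastic (M : Matrix ι ι ℝ) : Prop :=
  (∀ i j, 0 ≤ M i j) ∧ (∀ i, ∑ j, M i j ≤ 1) ∧ ∀ j, ∑ i, M i j ≤ 1

lemma IsSubDoublyStochastic.exists_le_mem_doublyStochastic [DecidableEq ι]
    {M : Matrix ι ι ℝ} (hM : IsSubDoublyStochastic M) :
    ∃ N ∈ doublyStochastic ℝ ι, ∀ i j, M i j ≤ N i j := by
  obtain ⟨h0, hrow, hcol⟩ := hM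
  set r : ι → ℝ := fun i => 1 - ∑ j, M i j
  set c : ι → ℝ := fun j => 1 - ∑ i, M i j
  set T := ∑ i, r i
  have hr : ∀ i, 0 ≤ r i := fun i => sub_nonneg.2 (hrow i)
  have hc : ∀ j, 0 ≤ c j := fun j => sub_nonneg.2 (hcol j)
  have hcT : ∑ j, c j = T := by simp only [c, r, T, sum_sub_distrib]; rw [sum_comm]
  have hcancel : ∀ a, 0 ≤ a → a ≤ T → a * T / T = a := fun a ha haT => by
    rcases eq_or_ne T 0 with hT | hT
    · simp [le_antisymm (hT ▸ haT) ha]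
    · exact mul_div_cancel_right₀ a hT
  have hslack : ∀ i j, 0 ≤ r i * c j / T :=
    fun i j => div_nonneg (mul_nonneg (hr i) (hc j)) (sum_nonneg fun k _ => hr k)
  -- The deficits `r` and `c` have the same total `T`; `r cᵀ / T` fills them in.
  refine ⟨M + of fun i j => r i * c j / T, mem_doublyStochastic_iff_sum.2 ⟨?_, ?_, ?_⟩, ?_⟩
  · exact fun i j => add_nonneg (h0 i j) (hslack i j)
  · intro i
    have : ∑ j, r i * c j / T = r i := by
      rw [← sum_div, ← mul_sum, hcT, hcancel _ (hr i)]
      exact single_le_sum (fun k _ => hr k) (mem_univ i)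
    simp only [Matrix.add_apply, of_apply, sum_add_distrib, this, r, add_sub_cancel]
  · intro j
    have : ∑ i, r i * c j / T = c j := by
      rw [← sum_div, ← sum_mul, mul_comm, hcancel _ (hc j)]
      exact hcT ▸ single_le_sum (fun k _ => hc k) (mem_univ j)
    simp only [Matrix.add_apply, of_apply, sum_add_distrib, this, c, add_sub_cancel]
  · exact fun i j => le_add_of_nonneg_right (hslack i j)

lemma isSubDoublyStochastic_toBlocks₁₁ [DecidableEq ι] {M : Matrix (ι ⊕ ι) (ι ⊕ ι) ℝ}
    (hM : M ∈ doublyStochastic ℝ (ι ⊕ ι)) : IsSubDoublyStochastic M.toBlocks₁₁ := by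
  have h0 : ∀ p q, 0 ≤ M p q := fun p q => nonneg_of_mem_doublyStochastic hM
  refine ⟨fun i j => h0 _ _, fun i => ?_, fun j => ?_⟩
  · have := sum_row_of_mem_doublyStochastic hM (Sum.inl i)
    rw [Fintype.sum_sum_type] at this
    have := sum_nonneg fun j (_ : j ∈ univ) => h0 (Sum.inl i) (Sum.inr j)
    simp only [toBlocks₁₁, of_apply]
    linarith
  · have := sum_col_of_mem_doublyStochastic hM (Sum.inl j)
    rw [Fintype.sum_sum_type] at this
    have := sum_nonneg fun i (_ : i ∈ univ) => h0 (Sum.inr i) (Sum.inl j)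
    simp only [toBlocks₁₁, of_apply]
    linarith

lemma IsSubDoublyStochastic.fromBlocks_mem_doublyStochastic [DecidableEq ι]
    {M : Matrix ι ι ℝ} (hM : IsSubDoublyStochastic M) :
    fromBlocks M (diagonal fun i => 1 - ∑ j, M i j) (diagonal fun j => 1 - ∑ i, M i j) Mᵀ ∈
      doublyStochastic ℝ (ι ⊕ ι) := by
  obtain ⟨h0, hrow, hcol⟩ := hM
  refine mem_doublyStochastic_iff_sum.2 ⟨?_, ?_, ?_⟩
  · rintro (i | i) (j | j) <;>
      simp [diagonal_apply, h0, apply_ite, sub_nonneg, hrow, hcol]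
  · rintro (i | i) <;> simp [Fintype.sum_sum_type, diagonal_apply]
  · rintro (j | j) <;> simp [Fintype.sum_sum_type, diagonal_apply]

def partialPermMatrix [DecidableEq ι] (σ : Equiv.Perm (ι ⊕ ι)) : Matrix ι ι ℝ :=
  (σ.permMatrix ℝ).toBlocks₁₁

lemma isSubDoublyStochastic_partialPermMatrix [DecidableEq ι] (σ : Equiv.Perm (ι ⊕ ι)) :
    IsSubDoublyStochastic (partialPermMatrix σ) :=
  isSubDoublyStochastic_toBlocks₁₁ permMatrix_mem_doublyStochastic

lemma partialPermMatrix_row_eq_zero_or_sum_eq_one [DecidableEq ι]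
    (σ : Equiv.Perm (ι ⊕ ι)) (i : ι) :
    partialPermMatrix σ i = 0 ∨ ∑ j, partialPermMatrix σ i j = 1 := by
  rcases h : σ (Sum.inl i) with j | j
  · right
    simp [partialPermMatrix, toBlocks₁₁, PEquiv.toMatrix_apply, h]
  · left
    ext k
    simp [partialPermMatrix, toBlocks₁₁, PEquiv.toMatrix_apply, h]

theorem IsSubDoublyStochastic.exists_eq_sum_partialPermMatrix [DecidableEq ι]
    {M : Matrix ι ι ℝ} (hM : IsSubDoublyStochastic M) :
    ∃ w : Equiv.Perm (ι ⊕ ι) → ℝ, (∀ σ, 0 ≤ w σ) ∧ ∑ σ, w σ = 1 ∧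
      ∑ σ, w σ • partialPermMatrix σ = M := by
  obtain ⟨w, hw0, hw1, hsum⟩ :=
    exists_eq_sum_perm_of_mem_doublyStochastic hM.fromBlocks_mem_doublyStochastic
  refine ⟨w, hw0, hw1, ?_⟩
  ext i j
  simpa [Matrix.sum_apply, partialPermMatrix, toBlocks₁₁] using
    congrFun (congrFun hsum (Sum.inl i)) (Sum.inl j)

end SubDoublyStochastic

section Welfare

variable {ι : Type*} [Fintype ι]

def welfare (A M : Matrix ι ι ℝ) : ℝ := ∑ i, ∑ j, A i j * M i j

lemma welfare_add (A M N : Matrix ι ι ℝ) : welfare A (M + N) = welfare A M + welfare A N := by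
  simp only [welfare, Matrix.add_apply, mul_add, sum_add_distrib]

lemma welfare_smul (A M : Matrix ι ι ℝ) (c : ℝ) : welfare A (c • M) = c * welfare A M := by
  simp only [welfare, Matrix.smul_apply, smul_eq_mul, mul_sum, mul_left_comm c]

lemma welfare_sum_smul {κ : Type*} [Fintype κ] (A : Matrix ι ι ℝ) (w : κ → ℝ)
    (M : κ → Matrix ι ι ℝ) : welfare A (∑ k, w k • M k) = ∑ k, w k * welfare A (M k) := by
  simp only [welfare, Matrix.sum_apply, Matrix.smul_apply, smul_eq_mul, mul_sum]
  calc _ = ∑ i, ∑ k, ∑ j, A i j * (w k * M k i j) := sum_congr rfl fun _ _ => sum_comm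
    _ = _ := sum_comm.trans <| by simp only [mul_left_comm (w _)]

lemma welfare_permMatrix [DecidableEq ι] (A : Matrix ι ι ℝ) (σ : Equiv.Perm ι) :
    welfare A (σ.permMatrix ℝ) = ∑ i, A i (σ i) := by
  simp [welfare, PEquiv.toMatrix_apply]

lemma sum_updateRow_apply [DecidableEq ι] (M : Matrix ι ι ℝ) (i : ι) (b : ι → ℝ) (j : ι) :
    ∑ k, M.updateRow i b k j = ∑ k, M k j - M i j + b j := by
  rw [← sum_erase_add _ _ (mem_univ i), ← sum_erase_add _ _ (mem_univ i), updateRow_self,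
    sum_congr rfl fun k hk => by rw [updateRow_ne (ne_of_mem_erase hk)]]
  ring

lemma welfare_updateRow [DecidableEq ι] (A M : Matrix ι ι ℝ) (i : ι) (b : ι → ℝ) :
    welfare A (M.updateRow i b) = welfare A M - ∑ j, A i j * M i j + ∑ j, A i j * b j := by
  have hrow : ∀ k, ∑ j, A k j * M.updateRow i b k j =
      ∑ j, A k j * M k j + if k = i then ∑ j, A i j * b j - ∑ j, A i j * M i j else 0 := by
    intro k
    by_cases hk : k = i
    · subst hk; simp
    · simp [hk]
  simp only [welfare, hrow, sum_add_distrib, sum_ite_eq', mem_univ, if_true]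
  ring

lemma welfare_le_welfare {A M N : Matrix ι ι ℝ} (hA : ∀ i j, 0 ≤ A i j)
    (h : ∀ i j, M i j ≤ N i j) : welfare A M ≤ welfare A N :=
  sum_le_sum fun i _ => sum_le_sum fun j _ => mul_le_mul_of_nonneg_left (h i j) (hA i j)

lemma welfare_le_sum {A M : Matrix ι ι ℝ} (hA : ∀ i j, 0 ≤ A i j) (hM0 : ∀ i j, 0 ≤ M i j)
    (hM : ∀ i, ∑ j, M i j ≤ 1) : welfare A M ≤ ∑ i, ∑ j, A i j := by
  refine sum_le_sum fun i _ => sum_le_sum fun j _ => mul_le_of_le_one_right (hA i j) ?_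
  exact (single_le_sum (fun k _ => hM0 i k) (mem_univ j)).trans (hM i)

end Welfare

section Optimal

variable {ι : Type*} [Fintype ι] [DecidableEq ι] {A x : Matrix ι ι ℝ}

lemma exists_perm_welfare_eq (hx : x ∈ doublyStochastic ℝ ι)
    (hopt : ∀ y ∈ doublyStochastic ℝ ι, welfare A y ≤ welfare A x) :
    ∃ σ : Equiv.Perm ι, welfare A (σ.permMatrix ℝ) = welfare A x := by
  obtain ⟨w, hw0, hw1, rfl⟩ := exists_eq_sum_perm_of_mem_doublyStochastic hx
  obtain ⟨σ, hσ⟩ := Finite.exists_max fun τ : Equiv.Perm ι => welfare A (τ.permMatrix ℝ)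
  refine ⟨σ, le_antisymm (hopt _ permMatrix_mem_doublyStochastic) ?_⟩
  calc welfare A (∑ τ, w τ • τ.permMatrix ℝ)
      = ∑ τ, w τ * welfare A (τ.permMatrix ℝ) := welfare_sum_smul _ _ _
    _ ≤ ∑ τ, w τ * welfare A (σ.permMatrix ℝ) :=
      sum_le_sum fun τ _ => mul_le_mul_of_nonneg_left (hσ τ) (hw0 τ)
    _ = welfare A (σ.permMatrix ℝ) := by rw [← sum_mul, hw1, one_mul]

lemma welfare_le_of_isSubDoublyStochastic (hA : ∀ i j, 0 ≤ A i j)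
    (hopt : ∀ y ∈ doublyStochastic ℝ ι, welfare A y ≤ welfare A x) {M : Matrix ι ι ℝ}
    (hM : IsSubDoublyStochastic M) : welfare A M ≤ welfare A x := by
  obtain ⟨N, hN, hMN⟩ := hM.exists_le_mem_doublyStochastic
  exact (welfare_le_welfare hA hMN).trans (hopt N hN)

noncomputable def welfareWithout (A : Matrix ι ι ℝ) (i : ι) : ℝ :=
  sSup (welfare A '' {M | IsSubDoublyStochastic M ∧ M i = 0})

omit [DecidableEq ι] in
lemma welfare_le_welfareWithout (hA : ∀ i j, 0 ≤ A i j) {M : Matrix ι ι ℝ} {i : ι}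
    (hM : IsSubDoublyStochastic M) (hMi : M i = 0) : welfare A M ≤ welfareWithout A i := by
  refine le_csSup ⟨∑ i, ∑ j, A i j, ?_⟩ ⟨M, ⟨hM, hMi⟩, rfl⟩
  rintro _ ⟨N, ⟨hN, -⟩, rfl⟩
  exact welfare_le_sum hA hN.1 hN.2.1

omit [DecidableEq ι] in
lemma welfareWithout_le {i : ι} {c : ℝ}
    (h : ∀ M, IsSubDoublyStochastic M → M i = 0 → welfare A M ≤ c) : welfareWithout A i ≤ c := by
  have h0 : IsSubDoublyStochastic (0 : Matrix ι ι ℝ) := ⟨fun _ _ => le_rfl, by simp, by simp⟩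
  refine csSup_le ⟨_, 0, ⟨h0, rfl⟩, rfl⟩ ?_
  rintro _ ⟨M, ⟨hM, hMi⟩, rfl⟩
  exact h M hM hMi

lemma welfareWithout_le_welfare (hA : ∀ i j, 0 ≤ A i j)
    (hopt : ∀ y ∈ doublyStochastic ℝ ι, welfare A y ≤ welfare A x) (i : ι) :
    welfareWithout A i ≤ welfare A x :=
  welfareWithout_le fun _ hM _ => welfare_le_of_isSubDoublyStochastic hA hopt hM

/-- By Birkhoff's theorem `S / 2` is a mixture of partial permutation matrices, and those serving
agent `i` carry total weight at most `1 / 2`. -/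
theorem welfare_le_add_welfareWithout (hA : ∀ i j, 0 ≤ A i j)
    (hopt : ∀ y ∈ doublyStochastic ℝ ι, welfare A y ≤ welfare A x) {S : Matrix ι ι ℝ} {i : ι}
    (hS0 : ∀ k j, 0 ≤ S k j) (hrow : ∀ k, ∑ j, S k j ≤ 2) (hcol : ∀ j, ∑ k, S k j ≤ 2)
    (hrowi : ∑ j, S i j ≤ 1) : welfare A S ≤ welfare A x + welfareWithout A i := by
  set W := welfare A x
  set V := welfareWithout A i
  have hhalf : IsSubDoublyStochastic ((1 / 2 : ℝ) • S) := by
    refine ⟨fun k j => ?_, fun k => ?_, fun j => ?_⟩ <;>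
      simp only [Matrix.smul_apply, smul_eq_mul, ← mul_sum]
    exacts [by linarith [hS0 k j], by linarith [hrow k], by linarith [hcol j]]
  obtain ⟨w, hw0, hw1, hsum⟩ := hhalf.exists_eq_sum_partialPermMatrix
  have hVW : V ≤ W := welfareWithout_le_welfare hA hopt i
  have hE : ∀ σ, welfare A (partialPermMatrix σ) ≤
      V + (∑ j, partialPermMatrix σ i j) * (W - V) := fun σ => by
    have hσ := isSubDoublyStochastic_partialPermMatrix σ
    rcases partialPermMatrix_row_eq_zero_or_sum_eq_one σ i with h | h
    · simpa [h] using welfare_le_welfareWithout hA hσ h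
    · simpa [h] using welfare_le_of_isSubDoublyStochastic hA hopt hσ
  have hrowE : ∑ σ, w σ * ∑ j, partialPermMatrix σ i j = (1 / 2) * ∑ j, S i j := by
    have := congrArg (fun M : Matrix ι ι ℝ => ∑ j, M i j) hsum
    simp only [Matrix.sum_apply, Matrix.smul_apply, smul_eq_mul, ← mul_sum] at this
    rw [← this, sum_comm]
    simp only [mul_sum]
  calc welfare A S = 2 * welfare A ((1 / 2 : ℝ) • S) := by rw [welfare_smul]; ring
    _ = 2 * ∑ σ, w σ * welfare A (partialPermMatrix σ) := by rw [← hsum, welfare_sum_smul]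
    _ ≤ 2 * ∑ σ, w σ * (V + (∑ j, partialPermMatrix σ i j) * (W - V)) := by
      gcongr with σ
      exacts [hw0 σ, hE σ]
    _ = 2 * V + (∑ j, S i j) * (W - V) := by
      simp only [mul_add, sum_add_distrib, ← sum_mul, ← mul_assoc, hw1, hrowE]
      ring
    _ ≤ W + V := by nlinarith

end Optimal

theorem complementary_slackness {ι : Type*} [Fintype ι] [DecidableEq ι] {A x : Matrix ι ι ℝ}
    {q p : ι → ℝ} (hx : x ∈ doublyStochastic ℝ ι) (hdual : ∀ i j, A i j ≤ q i + p j)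
    (hval : ∑ i, q i + ∑ j, p j ≤ welfare A x) (i : ι) :
    ∑ j, A i j * x i j = q i + ∑ j, p j * x i j := by
  set slack : ι → ℝ := fun k => q k + ∑ j, p j * x k j - ∑ j, A k j * x k j
  have hslack : ∀ k, 0 ≤ slack k := fun k => by
    have : ∑ j, A k j * x k j ≤ ∑ j, (q k + p j) * x k j := sum_le_sum fun j _ =>
      mul_le_mul_of_nonneg_right (hdual k j) (nonneg_of_mem_doublyStochastic hx)
    simp only [add_mul, sum_add_distrib, ← mul_sum, sum_row_of_mem_doublyStochastic hx,
      mul_one] at this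
    exact sub_nonneg.2 this
  have htotal : ∑ k, slack k ≤ 0 := by
    have hp : ∑ k, ∑ j, p j * x k j = ∑ j, p j := by
      rw [sum_comm]
      simp only [← mul_sum, sum_col_of_mem_doublyStochastic hx, mul_one]
    simp only [slack, sum_sub_distrib, sum_add_distrib, hp]
    exact sub_nonpos.2 hval
  have := (sum_eq_zero_iff_of_nonneg fun k _ => hslack k).1
    (le_antisymm htotal (sum_nonneg fun k _ => hslack k)) i (mem_univ i)
  linarith

section RelaxedWelfare

variable {n : ℕ} {A x : Matrix (Fin n) (Fin n) ℝ}

noncomputable def relaxedWelfare (A : Matrix (Fin n) (Fin n) ℝ) (l : Fin n) : ℝ :=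
  sSup (welfare A '' {M | FeasRelax l M})

lemma welfare_le_relaxedWelfare (hA : ∀ i j, 0 ≤ A i j) {l : Fin n} {M : Matrix (Fin n) (Fin n) ℝ}
    (hM : FeasRelax l M) : welfare A M ≤ relaxedWelfare A l := by
  refine le_csSup ⟨∑ i, ∑ j, A i j, ?_⟩ ⟨M, hM, rfl⟩
  rintro _ ⟨N, hN, rfl⟩
  exact welfare_le_sum hA hN.1 hN.2.1

lemma relaxedWelfare_le {l : Fin n} {c : ℝ}
    (h : ∀ M : Matrix (Fin n) (Fin n) ℝ, FeasRelax l M → welfare A M ≤ c) :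
    relaxedWelfare A l ≤ c := by
  have h0 : FeasRelax l (0 : Matrix (Fin n) (Fin n) ℝ) :=
    ⟨fun _ _ => le_rfl, by simp, by simp, by simp⟩
  refine csSup_le ⟨_, 0, h0, rfl⟩ ?_
  rintro _ ⟨M, hM, rfl⟩
  exact h M hM

/-- Giving agent `i` one unit of good `j` on top of any allocation that leaves her out is
feasible once the supply of `j` is doubled. -/
lemma add_welfareWithout_le_relaxedWelfare (hA : ∀ i j, 0 ≤ A i j) (i j : Fin n) :
    A i j + welfareWithout A i ≤ relaxedWelfare A j := by
  suffices ∀ M, IsSubDoublyStochastic M → M i = 0 → welfare A M ≤ relaxedWelfare A j - A i j by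
    linarith [welfareWithout_le this]
  intro M ⟨h0, hrow, hcol⟩ hMi
  have hfeas : FeasRelax j (M.updateRow i (Pi.single j 1)) := by
    refine ⟨fun k l => ?_, fun k => ?_, fun l hl => ?_, ?_⟩
    · rcases eq_or_ne k i with rfl | hk
      · simp [Pi.single_apply, apply_ite]
      · simpa [updateRow_ne hk] using h0 k l
    · rcases eq_or_ne k i with rfl | hk
      · simp
      · simpa [updateRow_ne hk] using hrow k
    · simpa [sum_updateRow_apply, hMi, hl] using hcol l
    · simp only [sum_updateRow_apply, hMi, Pi.zero_apply, Pi.single_eq_same]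
      linarith [hcol j]
  have := welfare_le_relaxedWelfare hA hfeas
  simp [welfare_updateRow, hMi, Pi.single_apply] at this
  linarith

/-- Adding the optimal permutation `σ` with agent `i` removed to an allocation feasible for a
doubled supply of `σ i` gives a matrix to which `welfare_le_add_welfareWithout` applies. -/
lemma relaxedWelfare_le_add_welfareWithout (hA : ∀ i j, 0 ≤ A i j)
    (hopt : ∀ y ∈ doublyStochastic ℝ (Fin n), welfare A y ≤ welfare A x)
    {σ : Equiv.Perm (Fin n)} (hσ : welfare A (σ.permMatrix ℝ) = welfare A x) (i : Fin n) :
    relaxedWelfare A (σ i) ≤ A i (σ i) + welfareWithout A i := by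
  refine relaxedWelfare_le fun M ⟨h0, hrow, hcol, hcoll⟩ => ?_
  set P := (σ.permMatrix ℝ).updateRow i 0
  have hP0 : ∀ k j, 0 ≤ P k j := fun k j => by
    rcases eq_or_ne k i with rfl | hk
    · simp [P]
    · simp [P, updateRow_ne hk, PEquiv.toMatrix_apply, apply_ite]
  have hProw : ∀ k, ∑ j, P k j = if k = i then 0 else 1 := fun k => by
    rcases eq_or_ne k i with rfl | hk
    · simp [P]
    · simp [P, PEquiv.toMatrix_apply, hk]
  have hPcol : ∀ j, ∑ k, P k j = if σ i = j then 0 else 1 := fun j => by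
    rw [sum_updateRow_apply, sum_col_of_mem_doublyStochastic permMatrix_mem_doublyStochastic]
    simp [PEquiv.toMatrix_apply, apply_ite]
  have hSrow : ∀ k, ∑ j, (M + P) k j = ∑ j, M k j + if k = i then 0 else 1 := fun k => by
    simp only [Matrix.add_apply, sum_add_distrib, hProw]
  have hScol : ∀ j, ∑ k, (M + P) k j = ∑ k, M k j + if σ i = j then 0 else 1 := fun j => by
    simp only [Matrix.add_apply, sum_add_distrib, hPcol]
  have hkey := welfare_le_add_welfareWithout hA hopt (S := M + P) (i := i)
    (fun k j => add_nonneg (h0 k j) (hP0 k j))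
    (fun k => by rw [hSrow]; split_ifs <;> linarith [hrow k])
    (fun j => by
      rw [hScol]
      split_ifs with hj
      · subst hj; linarith
      · linarith [hcol j (Ne.symm hj)])
    (by rw [hSrow, if_pos rfl, add_zero]; exact hrow i)
  have hPval : welfare A P = welfare A x - A i (σ i) := by
    simp [P, welfare_updateRow, hσ, PEquiv.toMatrix_apply]
  rw [welfare_add, hPval] at hkey
  linarith

lemma sum_relaxedWelfare_le (hA : ∀ i j, 0 ≤ A i j) (hx : x ∈ doublyStochastic ℝ (Fin n))
    (hopt : ∀ y ∈ doublyStochastic ℝ (Fin n), welfare A y ≤ welfare A x) :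
    ∑ j, relaxedWelfare A j ≤ welfare A x + ∑ i, welfareWithout A i := by
  obtain ⟨σ, hσ⟩ := exists_perm_welfare_eq hx hopt
  calc ∑ j, relaxedWelfare A j = ∑ i, relaxedWelfare A (σ i) := (Equiv.sum_comp σ _).symm
    _ ≤ ∑ i, (A i (σ i) + welfareWithout A i) :=
      sum_le_sum fun i _ => relaxedWelfare_le_add_welfareWithout hA hopt hσ i
    _ = welfare A x + ∑ i, welfareWithout A i := by
      rw [sum_add_distrib, ← welfare_permMatrix, hσ]

end RelaxedWelfare

section VCG

variable {n : ℕ} {u : Fin n → Fin n → ℝ} {lam : Fin n → ℝ} {x : Fin n → Fin n → ℝ}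

lemma sum_mul_dotp_eq_welfare (u : Fin n → Fin n → ℝ) (lam : Fin n → ℝ)
    (M : Fin n → Fin n → ℝ) :
    ∑ i, lam i * dotp (u i) (M i) = welfare (of fun i j => lam i * u i j) M := by
  simp only [dotp, welfare, mul_sum, of_apply, mul_assoc]

lemma vcg_eq_relaxedWelfare_sub_welfare (hx : IsAlloc x)
    (hmax : ∀ y, IsAlloc y → ∑ i, lam i * dotp (u i) (y i) ≤ ∑ i, lam i * dotp (u i) (x i)) :
    vcg u lam = fun l => relaxedWelfare (of fun i j => lam i * u i j) l -
      welfare (of fun i j => lam i * u i j) x := by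
  have himage : ∀ S : Set (Fin n → Fin n → ℝ), (fun M => ∑ i, lam i * dotp (u i) (M i)) '' S =
      welfare (of fun i j => lam i * u i j) '' S :=
    fun S => Set.image_congr fun M _ => sum_mul_dotp_eq_welfare u lam M
  have hWval : Wval u lam = welfare (of fun i j => lam i * u i j) x := by
    rw [Wval, himage]
    refine IsGreatest.csSup_eq ⟨⟨x, hx, rfl⟩, ?_⟩
    rintro _ ⟨y, hy, rfl⟩
    exact (sum_mul_dotp_eq_welfare u lam y).symm.trans_le
      ((hmax y hy).trans_eq (sum_mul_dotp_eq_welfare u lam x))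
  funext l
  rw [vcg, hWval, Wrelax, himage, relaxedWelfare]
  rfl

/-- The witness is `q = W(λ) - W₋ᵢ(λ)`, which together with the VCG prices is an optimal dual
solution of the welfare problem. -/
theorem exists_vcg_dual_solution (hu : ∀ i j, 0 ≤ u i j) (hlam : ∀ i, 0 ≤ lam i) (hx : IsAlloc x)
    (hmax : ∀ y, IsAlloc y → ∑ i, lam i * dotp (u i) (y i) ≤ ∑ i, lam i * dotp (u i) (x i))
    (i : Fin n) :
    ∃ q, 0 ≤ q ∧ (∀ j, lam i * u i j ≤ q + vcg u lam j) ∧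
      lam i * dotp (u i) (x i) = q + dotp (vcg u lam) (x i) := by
  set A : Matrix (Fin n) (Fin n) ℝ := of fun i j => lam i * u i j
  have hA : ∀ i j, 0 ≤ A i j := fun i j => mul_nonneg (hlam i) (hu i j)
  have hxDS : x ∈ doublyStochastic ℝ (Fin n) := mem_doublyStochastic_iff_sum.2 hx
  have hopt : ∀ y ∈ doublyStochastic ℝ (Fin n), welfare A y ≤ welfare A x := fun y hy =>
    (sum_mul_dotp_eq_welfare u lam y).symm.trans_le
      ((hmax y (mem_doublyStochastic_iff_sum.1 hy)).trans_eq (sum_mul_dotp_eq_welfare u lam x))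
  rw [vcg_eq_relaxedWelfare_sub_welfare hx hmax]
  have hdual : ∀ k j,
      A k j ≤ (welfare A x - welfareWithout A k) + (relaxedWelfare A j - welfare A x) :=
    fun k j => by linarith [add_welfareWithout_le_relaxedWelfare hA k j]
  have hval : ∑ k, (welfare A x - welfareWithout A k) + ∑ j, (relaxedWelfare A j - welfare A x) ≤
      welfare A x := by
    simp only [sum_sub_distrib]
    linarith [sum_relaxedWelfare_le hA hxDS hopt]
  refine ⟨_, sub_nonneg.2 (welfareWithout_le_welfare hA hopt i), hdual i, ?_⟩
  have hCS := complementary_slackness hxDS hdual hval i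
  simp only [A, of_apply, mul_assoc] at hCS
  rw [dotp, mul_sum]
  exact hCS

end VCG

lemma dotp_le_of_le_add_prices {n : ℕ} {c q : ℝ} {a p y z : Fin n → ℝ} (hc : 0 < c) (hq : 0 ≤ q)
    (hdom : ∀ j, c * a j ≤ q + p j) (heq : c * dotp a z = q + dotp p z) (hy : InSimplexLe y)
    (hbud : dotp p y ≤ dotp p z) : dotp a y ≤ dotp a z := by
  refine le_of_mul_le_mul_left ?_ hc
  calc c * dotp a y = ∑ j, c * a j * y j := by rw [dotp, mul_sum]; simp only [mul_assoc]
    _ ≤ ∑ j, (q + p j) * y j := sum_le_sum fun j _ => mul_le_mul_of_nonneg_right (hdom j) (hy.1 j)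
    _ = q * ∑ j, y j + dotp p y := by rw [dotp, mul_sum, ← sum_add_distrib]; simp only [add_mul]
    _ ≤ q * 1 + dotp p z := by gcongr; exact hy.2
    _ = c * dotp a z := by rw [mul_one, heq]

lemma sum_dotp_sub_eq_zero {n : ℕ} (p : Fin n → ℝ) {x ω : Fin n → Fin n → ℝ}
    (hx : ∀ j, ∑ i, x i j = 1) (hω : ∀ j, ∑ i, ω i j = 1) :
    ∑ i, (dotp p (x i) - dotp p (ω i)) = 0 := by
  simp only [dotp, sum_sub_distrib]
  rw [sum_comm, sum_comm (f := fun i j => p j * ω i j)]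
  simp only [← mul_sum, hx, hω, sub_self]

theorem greatest_overspender_optimal_general {n : ℕ}
    (u ω : Fin n → Fin n → ℝ)
    (hu : ∀ i j, 0 ≤ u i j)
    (hω1 : ∀ j, ∑ i, ω i j = 1)
    (lam : Fin n → ℝ) (hlam : ∀ i, 0 < lam i)
    (x : Fin n → Fin n → ℝ) (hx : IsAlloc x)
    (hmax : ∀ y, IsAlloc y →
      ∑ i, lam i * dotp (u i) (y i) ≤ ∑ i, lam i * dotp (u i) (x i))
    (istar : Fin n)
    (histar : ∀ i : Fin n,
      dotp (vcg u lam) (x i) - dotp (vcg u lam) (ω i) ≤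
      dotp (vcg u lam) (x istar) - dotp (vcg u lam) (ω istar)) :
    IsGreatest
      {v | ∃ y : Fin n → ℝ, InSimplexLe y ∧
            dotp (vcg u lam) y ≤ dotp (vcg u lam) (ω istar) +
              max (dotp (vcg u lam) (x istar) - dotp (vcg u lam) (ω istar)) 0 ∧
            v = dotp (u istar) y}
      (dotp (u istar) (x istar)) := by
  obtain ⟨q, hq, hdom, heq⟩ := exists_vcg_dual_solution hu (fun i => (hlam i).le) hx hmax istar
  have hexcess : 0 ≤ dotp (vcg u lam) (x istar) - dotp (vcg u lam) (ω istar) := by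
    obtain ⟨i, -, hi⟩ := exists_le_of_sum_le (f := fun _ => 0)
      (g := fun i => dotp (vcg u lam) (x i) - dotp (vcg u lam) (ω i)) ⟨istar, mem_univ _⟩
      (by rw [sum_const_zero, sum_dotp_sub_eq_zero _ hx.2.2 hω1])
    exact hi.trans (histar i)
  rw [max_eq_left hexcess, add_sub_cancel]
  refine ⟨⟨x istar, ⟨hx.1 istar, (hx.2.1 istar).le⟩, le_rfl, rfl⟩, ?_⟩
  rintro _ ⟨y, hy, hbud, rfl⟩
  exact dotp_le_of_le_add_prices (hlam istar) hq hdom heq hy hbud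

/-- at a weighted-welfare-maximizing allocation with positive weights,
the agent `i*` with the greatest excess expenditure `p(λ) · (x_i − ω_i)` receives her
favorite bundle affordable at income `p(λ) · ω_{i*} + α` where
`α = max(p(λ) · (x_{i*} − ω_{i*}), 0)`. -/
theorem greatest_overspender_optimal {n : ℕ} (hn : 0 < n)
    (u ω : Fin n → Fin n → ℝ)
    (hu : ∀ i j, 0 ≤ u i j) (hω0 : ∀ i j, 0 ≤ ω i j)
    (hω1 : ∀ j, ∑ i, ω i j = 1)
    (lam : Fin n → ℝ) (hlam : ∀ i, 0 < lam i)
    (x : Fin n → Fin n → ℝ) (hx : IsAlloc x)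
    (hmax : ∀ y, IsAlloc y →
      ∑ i, lam i * dotp (u i) (y i) ≤ ∑ i, lam i * dotp (u i) (x i))
    (istar : Fin n)
    (histar : ∀ i : Fin n,
      dotp (vcg u lam) (x i) - dotp (vcg u lam) (ω i) ≤
      dotp (vcg u lam) (x istar) - dotp (vcg u lam) (ω istar)) :
    IsGreatest
      {v | ∃ y : Fin n → ℝ, InSimplexLe y ∧
            dotp (vcg u lam) y ≤ dotp (vcg u lam) (ω istar) +
              max (dotp (vcg u lam) (x istar) - dotp (vcg u lam) (ω istar)) 0 ∧
            v = dotp (u istar) y}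
      (dotp (u istar) (x istar)) :=
  greatest_overspender_optimal_general u ω hu hω1 lam hlam x hx hmax istar histar
end

section
/- First welfare theorem for lexicographic dividend equilibria: if (x, p, α) is a d-dimensional lexicographic dividend equilibrium for the economy (u, ω) satisfying the strong cheapest bundle property, then x is fractionally Pareto optimal, i.e., there is no y ∈ M with u_i · y_i ≥ u_i · x_i for every agent i and u_i · y_i > u_i · x_i for some agent i. -/
open Finset

/-- `k_i` (0-based): the first currency in which agent `i` has positive income,
or the last currency `d - 1` if there is none. -/
noncomputable def kIdx {n : ℕ} (d : ℕ) (p α : ℕ → Fin n → ℝ)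
    (ω : Fin n → Fin n → ℝ) (i : Fin n) : ℕ :=
  sInf ({k | k < d ∧ 0 < dotp (p k) (ω i) + α k i} ∪ {d - 1})

/-- The budget set `C^α_i(p)`. -/
def BudgetSet {n : ℕ} (d : ℕ) (p α : ℕ → Fin n → ℝ)
    (ω : Fin n → Fin n → ℝ) (i : Fin n) : Set (Fin n → ℝ) :=
  {y | InSimplexLe y ∧
    ∀ k ≤ kIdx d p α ω i, dotp (p k) y ≤ dotp (p k) (ω i) + α k i}

/-- `(x, p, α)` is a `d`-dimensional lexicographic dividend equilibrium for `(u, ω)`.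
Currencies are indexed 0-based by `k < d`. -/
def IsLDE {n : ℕ} (u ω : Fin n → Fin n → ℝ) (d : ℕ)
    (x : Fin n → Fin n → ℝ) (p α : ℕ → Fin n → ℝ) : Prop :=
  IsAlloc x ∧
  (∀ k, k < d → ∀ i, 0 ≤ α k i) ∧
  (∀ (j : Fin n) (k : ℕ), k < d → p k j ≠ 0 → (∀ l < k, p l j = 0) → 0 < p k j) ∧
  (∀ (i : Fin n) (k : ℕ), k < d →
    α k i = max (dotp (p k) (fun j => x i j - ω i j)) 0) ∧
  (∀ (i : Fin n), ∀ y ∈ BudgetSet d p α ω i, dotp (u i) y ≤ dotp (u i) (x i))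

/-- The strong cheapest bundle property. -/
def StrongCB {n : ℕ} (u : Fin n → Fin n → ℝ) (d : ℕ)
    (x : Fin n → Fin n → ℝ) (p : ℕ → Fin n → ℝ) : Prop :=
  ¬ ∃ (i : Fin n) (y : Fin n → ℝ) (k : ℕ),
      InSimplexLe y ∧ dotp (u i) (x i) ≤ dotp (u i) y ∧ k < d ∧
      (∀ l < k, dotp (p l) y = dotp (p l) (x i)) ∧
      dotp (p k) y < dotp (p k) (x i)

/-!
If `y` Pareto-dominates `x`, the strong cheapest bundle property forces every `y i` to cost at
least as much as `x i` in currency `k` once it costs the same in all earlier currencies. Since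
both allocations distribute the whole supply, total cost is the same, so by induction on `k`
each `y i` costs exactly what `x i` costs in every currency. The dividends then keep `y i`
affordable for agent `i`, and optimality of `x i` on the budget set contradicts the strict gain.
-/

variable {n : ℕ}

lemma dotp_sub_right (a b c : Fin n → ℝ) :
    dotp a (fun j => b j - c j) = dotp a b - dotp a c := by
  simp only [dotp, mul_sub, sum_sub_distrib]

lemma sum_dotp_of_sum_col_eq_one {x : Fin n → Fin n → ℝ} (hcol : ∀ j, ∑ i, x i j = 1)
    (q : Fin n → ℝ) : ∑ i, dotp q (x i) = ∑ j, q j := by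
  simp only [dotp]
  rw [sum_comm]
  simp only [← mul_sum, hcol, mul_one]

lemma IsAlloc.inSimplexLe {x : Fin n → Fin n → ℝ} (hx : IsAlloc x) (i : Fin n) :
    InSimplexLe (x i) :=
  ⟨hx.1 i, (hx.2.1 i).le⟩

lemma kIdx_le_pred (d : ℕ) (p α : ℕ → Fin n → ℝ) (ω : Fin n → Fin n → ℝ) (i : Fin n) :
    kIdx d p α ω i ≤ d - 1 :=
  Nat.sInf_le (Or.inr rfl)

section Equilibrium

variable {u ω x : Fin n → Fin n → ℝ} {d : ℕ} {p α : ℕ → Fin n → ℝ}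

lemma StrongCB.dotp_le (hCB : StrongCB u d x p) {i : Fin n} {z : Fin n → ℝ} {k : ℕ}
    (hz : InSimplexLe z) (hu : dotp (u i) (x i) ≤ dotp (u i) z) (hk : k < d)
    (heq : ∀ l < k, dotp (p l) z = dotp (p l) (x i)) :
    dotp (p k) (x i) ≤ dotp (p k) z :=
  not_lt.mp fun hlt => hCB ⟨i, z, k, hz, hu, hk, heq, hlt⟩

lemma StrongCB.dotp_eq_of_pareto_le (hCB : StrongCB u d x p) {y : Fin n → Fin n → ℝ}
    (hx : IsAlloc x) (hy : IsAlloc y) (hle : ∀ i, dotp (u i) (x i) ≤ dotp (u i) (y i)) :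
    ∀ k < d, ∀ i, dotp (p k) (y i) = dotp (p k) (x i) := by
  intro k
  induction k using Nat.strong_induction_on with
  | _ k ih =>
    intro hk i
    have hge : ∀ i ∈ univ, dotp (p k) (x i) ≤ dotp (p k) (y i) := fun i _ =>
      hCB.dotp_le (hy.inSimplexLe i) (hle i) hk fun l hl => ih l hl (hl.trans hk) i
    have htotal : ∑ i, dotp (p k) (x i) = ∑ i, dotp (p k) (y i) := by
      rw [sum_dotp_of_sum_col_eq_one hx.2.2, sum_dotp_of_sum_col_eq_one hy.2.2]
    exact ((sum_eq_sum_iff_of_le hge).mp htotal i (mem_univ i)).symm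

lemma IsLDE.mem_budgetSet (hLDE : IsLDE u ω d x p α) (hd : 1 ≤ d) {i : Fin n}
    {z : Fin n → ℝ} (hz : InSimplexLe z) (hprice : ∀ k < d, dotp (p k) z = dotp (p k) (x i)) :
    z ∈ BudgetSet d p α ω i := by
  refine ⟨hz, fun k hk => ?_⟩
  have hkd : k < d := by have := kIdx_le_pred d p α ω i; omega
  have hdiv : dotp (p k) (x i) - dotp (p k) (ω i) ≤ α k i := by
    rw [hLDE.2.2.2.1 i k hkd, dotp_sub_right]
    exact le_max_left _ _
  rw [hprice k hkd]
  linarith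

end Equilibrium

theorem lde_first_welfare_general {n : ℕ} (u ω : Fin n → Fin n → ℝ)
    (d : ℕ) (hd : 1 ≤ d) (x : Fin n → Fin n → ℝ) (p α : ℕ → Fin n → ℝ)
    (hLDE : IsLDE u ω d x p α) (hCB : StrongCB u d x p) :
    ¬ ∃ y : Fin n → Fin n → ℝ, IsAlloc y ∧
        (∀ i, dotp (u i) (x i) ≤ dotp (u i) (y i)) ∧
        (∃ i, dotp (u i) (x i) < dotp (u i) (y i)) := by
  rintro ⟨y, hy, hle, i, hlt⟩
  have hprice := hCB.dotp_eq_of_pareto_le hLDE.1 hy hle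
  have hbudget : y i ∈ BudgetSet d p α ω i :=
    hLDE.mem_budgetSet hd (hy.inSimplexLe i) fun k hk => hprice k hk i
  exact (hLDE.2.2.2.2 i (y i) hbudget).not_gt hlt

/-- first welfare theorem for LDEs: the allocation of an LDE
satisfying the strong cheapest bundle property is fractionally Pareto optimal. -/
theorem lde_first_welfare {n : ℕ} (hn : 0 < n) (u ω : Fin n → Fin n → ℝ)
    (hu : ∀ i j, 0 ≤ u i j) (hω0 : ∀ i j, 0 ≤ ω i j)
    (hω1 : ∀ j, ∑ i, ω i j = 1)
    (d : ℕ) (hd : 1 ≤ d) (x : Fin n → Fin n → ℝ) (p α : ℕ → Fin n → ℝ)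
    (hLDE : IsLDE u ω d x p α) (hCB : StrongCB u d x p) :
    ¬ ∃ y : Fin n → Fin n → ℝ, IsAlloc y ∧
        (∀ i, dotp (u i) (x i) ≤ dotp (u i) (y i)) ∧
        (∃ i, dotp (u i) (x i) < dotp (u i) (y i)) :=
  lde_first_welfare_general u ω d hd x p α hLDE hCB
end
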